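/- Additive disjunction cut: if ⊩_B^L φ⊕ψ, φ ⊩_B^K χ, and ψ ⊩_B^K χ, then ⊩_B^{L⊎K} χ. -/

import Mathlib

abbrev Atom := ℕ
abbrev ASeq := Multiset Atom × Atom
abbrev Box := Multiset ASeq
abbrev ARule := Multiset Box × Box × Atom
abbrev Base := Set ARule

/-- An atom `d` is persistent in `B` if there is a rule `⟨∅, S, d⟩ ∈ B` with `S` nonempty. -/
def Persistent (B : Base) (d : Atom) : Prop :=
  ∃ S : Box, S ≠ 0 ∧ ((0 : Multiset Box), S, d) ∈ B

/-- Atomic derivability in a base. -/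
inductive Deriv (B : Base) : Multiset Atom → Atom → Prop
  | ref (p : Atom) : Deriv B {p} p
  | app (S : Box) (p : Atom)
      (bc : List (Box × Multiset Atom))
      (dc : List (Atom × Multiset Atom))
      (hrule : ((↑(bc.map Prod.fst) : Multiset Box), S, p) ∈ B)
      (hpers : ∀ x ∈ dc, Persistent B x.1)
      (hbox : ∀ x ∈ bc, ∀ s ∈ x.1, Deriv B (x.2 + s.1) s.2)
      (hd : ∀ x ∈ dc, Deriv B x.2 x.1)
      (hS : ∀ s ∈ S, Deriv B ((↑(dc.map Prod.fst) : Multiset Atom) + s.1) s.2) :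
      Deriv B ((bc.map Prod.snd).sum + (dc.map Prod.snd).sum) p

/-- Formulas of intuitionistic linear logic. -/
inductive Fml : Type
  | atom : Atom → Fml
  | top : Fml
  | zero : Fml
  | one : Fml
  | limp : Fml → Fml → Fml
  | tens : Fml → Fml → Fml
  | wth : Fml → Fml → Fml
  | plus : Fml → Fml → Fml
  | bang : Fml → Fml
deriving DecidableEq

/-- The degree of a formula. -/
def deg : Fml → ℕ
  | .atom _ => 1
  | .top => 2
  | .zero => 2
  | .one => 2
  | .limp φ ψ => deg φ + deg ψ + 1
  | .tens φ ψ => deg φ + deg ψ + 1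
  | .wth φ ψ => deg φ + deg ψ + 1
  | .plus φ ψ => deg φ + deg ψ + 1
  | .bang φ => deg φ + 1

theorem one_le_deg (φ : Fml) : 1 ≤ deg φ := by
  cases φ <;> simp [deg] <;> omega

mutual
  /-- Support `⊩_B^L φ` (empty left-hand side). -/
  def Supp : Base → Multiset Atom → Fml → Prop
    | B, L, .atom p => Deriv B L p
    | _, _, .top => True
    | B, L, .zero => ∀ (K : Multiset Atom) (p : Atom), Supp B (L + K) (.atom p)
    | B, L, .one => ∀ C : Base, B ⊆ C → ∀ (K : Multiset Atom) (p : Atom),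
        Supp C K (.atom p) → Supp C (L + K) (.atom p)
    | B, L, .limp φ ψ => SuppInf1 B L φ ψ
    | B, L, .tens φ ψ => ∀ C : Base, B ⊆ C → ∀ (K : Multiset Atom) (p : Atom),
        SuppInf2 C K φ ψ (.atom p) → Supp C (L + K) (.atom p)
    | B, L, .wth φ ψ => Supp B L φ ∧ Supp B L ψ
    | B, L, .plus φ ψ => ∀ C : Base, B ⊆ C → ∀ (K : Multiset Atom) (p : Atom),
        SuppInf1 C K φ (.atom p) → SuppInf1 C K ψ (.atom p) → Supp C (L + K) (.atom p)
    | B, L, .bang φ => ∀ C : Base, B ⊆ C → ∀ (K : Multiset Atom) (p : Atom),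
        (∀ D : Base, C ⊆ D → Supp D 0 φ → Supp D K (.atom p)) → Supp C (L + K) (.atom p)
  termination_by B L φ => 2 * deg φ
  decreasing_by
    all_goals
      try simp only [deg]
      try have h1 := one_le_deg φ
      try have h2 := one_le_deg ψ
      try have h3 := one_le_deg χ
      try have h4 := one_le_deg α
      try have h5 := one_le_deg β
      omega

  /-- The (Inf) clause for a singleton context `{φ} ⊩_B^L χ`. -/
  def SuppInf1 : Base → Multiset Atom → Fml → Fml → Prop
    | B, L, .bang α, χ => ∀ C : Base, B ⊆ C → Supp C 0 α → Supp C L χ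
    | B, L, φ, χ => ∀ C : Base, B ⊆ C → ∀ K : Multiset Atom,
        Supp C K φ → Supp C (L + K) χ
  termination_by B L φ χ => 2 * (deg φ + deg χ) - 1
  decreasing_by
    all_goals
      try simp only [deg]
      try have h1 := one_le_deg φ
      try have h2 := one_le_deg ψ
      try have h3 := one_le_deg χ
      try have h4 := one_le_deg α
      try have h5 := one_le_deg β
      omega

  /-- The (Inf) clause for a two-element context `{φ, ψ} ⊩_B^L χ`. -/
  def SuppInf2 : Base → Multiset Atom → Fml → Fml → Fml → Prop
    | B, L, .bang α, .bang β, χ => ∀ C : Base, B ⊆ C →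
        Supp C 0 α → Supp C 0 β → Supp C L χ
    | B, L, .bang α, ψ, χ => ∀ C : Base, B ⊆ C → ∀ K : Multiset Atom,
        Supp C 0 α → Supp C K ψ → Supp C (L + K) χ
    | B, L, φ, .bang β, χ => ∀ C : Base, B ⊆ C → ∀ K : Multiset Atom,
        Supp C 0 β → Supp C K φ → Supp C (L + K) χ
    | B, L, φ, ψ, χ => ∀ C : Base, B ⊆ C → ∀ K₁ K₂ : Multiset Atom,
        Supp C K₁ φ → Supp C K₂ ψ → Supp C (L + K₁ + K₂) χ
  termination_by B L φ ψ χ => 2 * (deg φ + deg ψ + deg χ) - 1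
  decreasing_by
    all_goals
      try simp only [deg]
      try have h1 := one_le_deg φ
      try have h2 := one_le_deg ψ
      try have h3 := one_le_deg χ
      try have h4 := one_le_deg α
      try have h5 := one_le_deg β
      omega
end

/-- Is the formula a `!`-formula? -/
def isBang : Fml → Bool
  | .bang _ => true
  | _ => false

/-- Strip a top-level `!`. -/
def unbang : Fml → Fml
  | .bang φ => φ
  | φ => φ

/-- Support for a multiset of formulas: the `(⊎)` clause. -/
def SuppMS (B : Base) (L : Multiset Atom) (Γ : Multiset Fml) : Prop :=
  ∃ l : List (Fml × Multiset Atom), (↑(l.map Prod.fst) : Multiset Fml) = Γ ∧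
    (l.map Prod.snd).sum = L ∧ ∀ x ∈ l, Supp B x.2 x.1

/-- The official (Inf) clause: `Γ ⊩_B^L φ`, where `Γ = !Δ ⊎ Θ`. -/
def SuppSeq (B : Base) (L : Multiset Atom) (Γ : Multiset Fml) (φ : Fml) : Prop :=
  ∀ C : Base, B ⊆ C → ∀ K : Multiset Atom,
    SuppMS C 0 ((Γ.filter (fun ψ => isBang ψ = true)).map unbang) →
    SuppMS C K (Γ.filter (fun ψ => isBang ψ = false)) →
    Supp C (L + K) φ

/-- Validity of a sequent `(Γ : φ)`. -/
def Valid (Γ : Multiset Fml) (φ : Fml) : Prop :=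
  ∀ B : Base, SuppSeq B 0 Γ φ

/-! Atomic eliminations suffice: by induction on `χ`, `⊩_B^M χ` holds as soon as
`⊩_C^{M⊎K'} p` for every `C ⊇ B` and every atomic elimination `χ ⊩_C^{K'} p`. Composing such
an elimination with `φ ⊩_B^K χ` and `ψ ⊩_B^K χ` gives `φ ⊩_C^{K⊎K'} p` and `ψ ⊩_C^{K⊎K'} p`,
which the (⊕) clause for `⊩_B^L φ⊕ψ` turns into `⊩_C^{L⊎K⊎K'} p`. -/

theorem Deriv.mono {B C : Base} (h : B ⊆ C) {L : Multiset Atom} {p : Atom}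
    (hd : Deriv B L p) : Deriv C L p := by
  induction hd with
  | ref p => exact .ref p
  | app S p bc dc hrule hpers _ _ _ ihbox ihd ihS =>
    exact .app S p bc dc (h hrule)
      (fun x hx => (hpers x hx).imp fun _ hS => ⟨hS.1, h hS.2⟩) ihbox ihd ihS

theorem SuppInf1.mono {B C : Base} (h : B ⊆ C) {L : Multiset Atom} {φ χ : Fml}
    (hx : SuppInf1 B L φ χ) : SuppInf1 C L φ χ := by
  cases φ <;> simp only [SuppInf1] at hx ⊢ <;> exact fun D hD => hx D (h.trans hD)

theorem SuppInf2.mono {B C : Base} (h : B ⊆ C) {L : Multiset Atom} {φ ψ χ : Fml}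
    (hx : SuppInf2 B L φ ψ χ) : SuppInf2 C L φ ψ χ := by
  cases φ <;> cases ψ <;> simp only [SuppInf2] at hx ⊢ <;>
    exact fun D hD => hx D (h.trans hD)

theorem Supp.mono {B C : Base} (h : B ⊆ C) {L : Multiset Atom} {φ : Fml}
    (hx : Supp B L φ) : Supp C L φ := by
  induction φ generalizing L with
  | atom p => simp only [Supp] at hx ⊢; exact hx.mono h
  | top => simp only [Supp]
  | zero => simp only [Supp] at hx ⊢; exact fun K p => (hx K p).mono h
  | limp φ ψ => simp only [Supp] at hx ⊢; exact hx.mono h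
  | wth φ ψ ihφ ihψ => simp only [Supp] at hx ⊢; exact ⟨ihφ hx.1, ihψ hx.2⟩
  | _ => simp only [Supp] at hx ⊢; exact fun D hD => hx D (h.trans hD)

theorem supp_atom_of_suppInf1 {C D : Base} (hCD : C ⊆ D) {N K : Multiset Atom} {φ : Fml}
    {p : Atom} (hφ : Supp D N φ) (hinf : SuppInf1 C K φ (.atom p)) :
    Supp D (N + K) (.atom p) := by
  cases φ with
  | bang α =>
    simp only [Supp, SuppInf1] at hφ hinf ⊢
    exact hφ D le_rfl K p fun E hE => hinf E (hCD.trans hE)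
  | _ =>
    simp only [SuppInf1] at hinf
    rw [add_comm]
    exact hinf D hCD N hφ

theorem suppInf1_atom_of_forall {C : Base} {K : Multiset Atom} {χ : Fml} {p : Atom}
    (hχ : isBang χ = false)
    (h : ∀ D, C ⊆ D → ∀ N, Supp D N χ → Supp D (N + K) (.atom p)) :
    SuppInf1 C K χ (.atom p) := by
  cases χ <;> simp only [isBang, Bool.true_eq_false] at hχ <;> simp only [SuppInf1] <;>
    exact fun D hD N hN => add_comm N K ▸ h D hD N hN

theorem supp_limp_of_forall_suppInf1_atom {φ ψ : Fml}
    (ihψ : ∀ {C : Base} {M : Multiset Atom}, (∀ D, C ⊆ D → ∀ K p,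
      SuppInf1 D K ψ (.atom p) → Supp D (M + K) (.atom p)) → Supp C M ψ)
    {B : Base} {M : Multiset Atom} (H : ∀ C, B ⊆ C → ∀ K p,
      SuppInf1 C K (.limp φ ψ) (.atom p) → Supp C (M + K) (.atom p)) :
    Supp B M (.limp φ ψ) := by
  rw [Supp]
  cases φ with
  | bang α =>
    simp only [SuppInf1]
    intro C hC hα
    refine ihψ fun D hD K p hinf => H D (hC.trans hD) K p <| suppInf1_atom_of_forall rfl ?_
    intro E hE N hlimp
    rw [Supp] at hlimp
    simp only [SuppInf1] at hlimp
    exact supp_atom_of_suppInf1 hE (hlimp E le_rfl ((hα.mono hD).mono hE)) hinf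
  | _ =>
    simp only [SuppInf1]
    intro C hC N hφ
    refine ihψ fun D hD K p hinf => ?_
    rw [add_assoc]
    refine H D (hC.trans hD) (N + K) p <| suppInf1_atom_of_forall rfl ?_
    intro E hE N' hlimp
    rw [Supp] at hlimp
    simp only [SuppInf1] at hlimp
    rw [← add_assoc]
    exact supp_atom_of_suppInf1 hE (hlimp E le_rfl N ((hφ.mono hD).mono hE)) hinf

theorem supp_of_forall_suppInf1_atom (χ : Fml) {B : Base} {M : Multiset Atom}
    (H : ∀ C, B ⊆ C → ∀ K p, SuppInf1 C K χ (.atom p) → Supp C (M + K) (.atom p)) :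
    Supp B M χ := by
  induction χ generalizing B M with
  | atom q =>
    simpa using H B le_rfl 0 q (by simp only [SuppInf1, zero_add]; exact fun _ _ _ => id)
  | top => rw [Supp]; trivial
  | zero =>
    rw [Supp]
    refine fun K p => H B le_rfl K p <| suppInf1_atom_of_forall rfl fun D _ N hN => ?_
    rw [Supp] at hN
    exact hN K p
  | one =>
    rw [Supp]
    refine fun C hC K p hK => H C hC K p <| suppInf1_atom_of_forall rfl fun D hD N hN => ?_
    rw [Supp] at hN
    exact hN D le_rfl K p (hK.mono hD)
  | limp φ ψ _ ihψ => exact supp_limp_of_forall_suppInf1_atom ihψ H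
  | tens φ ψ =>
    rw [Supp]
    refine fun C hC K p hK => H C hC K p <| suppInf1_atom_of_forall rfl fun D hD N hN => ?_
    rw [Supp] at hN
    exact hN D le_rfl K p (hK.mono hD)
  | wth φ ψ ihφ ihψ =>
    rw [Supp]
    constructor
    · refine ihφ fun C hC K p hinf => H C hC K p <|
        suppInf1_atom_of_forall rfl fun D hD N hN => ?_
      rw [Supp] at hN
      exact supp_atom_of_suppInf1 hD hN.1 hinf
    · refine ihψ fun C hC K p hinf => H C hC K p <|
        suppInf1_atom_of_forall rfl fun D hD N hN => ?_
      rw [Supp] at hN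
      exact supp_atom_of_suppInf1 hD hN.2 hinf
  | plus φ ψ =>
    rw [Supp]
    refine fun C hC K p hφ hψ => H C hC K p <| suppInf1_atom_of_forall rfl fun D hD N hN => ?_
    rw [Supp] at hN
    exact hN D le_rfl K p (hφ.mono hD) (hψ.mono hD)
  | bang φ =>
    rw [Supp]
    simpa only [SuppInf1] using H

theorem suppMS_zero (B : Base) : SuppMS B 0 0 :=
  ⟨[], rfl, rfl, by simp⟩

theorem Supp.suppMS_singleton {B : Base} {N : Multiset Atom} {φ : Fml} (h : Supp B N φ) :
    SuppMS B N {φ} :=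
  ⟨[(φ, N)], rfl, by simp, by simpa using h⟩

theorem SuppSeq.suppInf1_of_singleton {B : Base} {K : Multiset Atom} {φ χ : Fml}
    (h : SuppSeq B K {φ} χ) : SuppInf1 B K φ χ := by
  cases φ with
  | bang α =>
    simp only [SuppInf1]
    intro C hC hα
    rw [← add_zero K]
    apply h C hC 0 <;> rw [Multiset.filter_singleton]
    · simpa [isBang, unbang] using hα.suppMS_singleton
    · simpa [isBang] using suppMS_zero C
  | _ =>
    simp only [SuppInf1]
    intro C hC N hφ
    apply h C hC N <;> rw [Multiset.filter_singleton]
    · simpa [isBang] using suppMS_zero C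
    · simpa [isBang] using hφ.suppMS_singleton

theorem SuppInf1.trans_atom {B C : Base} (hBC : B ⊆ C) {K K' : Multiset Atom} {φ χ : Fml}
    {p : Atom} (h : SuppInf1 B K φ χ) (hχ : SuppInf1 C K' χ (.atom p)) :
    SuppInf1 C (K + K') φ (.atom p) := by
  cases φ with
  | bang α =>
    simp only [SuppInf1] at h ⊢
    exact fun D hD hα => supp_atom_of_suppInf1 hD (h D (hBC.trans hD) hα) hχ
  | _ =>
    simp only [SuppInf1] at h ⊢
    intro D hD N hφ
    rw [add_right_comm]
    exact supp_atom_of_suppInf1 hD (h D (hBC.trans hD) N hφ) hχ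

theorem plus_cut (B : Base) (L K : Multiset Atom) (φ ψ χ : Fml)
    (h1 : Supp B L (.plus φ ψ)) (h2 : SuppSeq B K {φ} χ) (h3 : SuppSeq B K {ψ} χ) :
    Supp B (L + K) χ := by
  refine supp_of_forall_suppInf1_atom χ fun C hC K' p hχ => ?_
  rw [Supp] at h1
  rw [add_assoc]
  exact h1 C hC (K + K') p (h2.suppInf1_of_singleton.trans_atom hC hχ)
    (h3.suppInf1_of_singleton.trans_atom hC hχ)
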